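/- arXiv:2411.08824 — 2 statements merged into one kernel-verified Lean document; each statement's English description precedes it below -/
import Mathlib

section
/- Let Q be a symmetric real n×n matrix, i ≠ j indices, S a semi-symmetry set for (i,j), and Q_mod the modified (n+1)×(n+1) matrix, where z satisfies z ≥ Σ_{k∈S} |Q[i,k]|. Then for every binary vector x ∈ {0,1}^n that is valid, i.e. x_i = 0 or x_j = 0, the minimum over the ancilla value a ∈ {0,1} of H_{Q_mod}((x,a)) equals H_Q(x); that is, the modification does not change the energy of valid solutions under the best choice of ancilla value. -/
open Finset

/-- Energy of a binary vector `x` w.r.t. a QUBO matrix `Q`: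
`H_Q(x) = Σ_k Q[k,k]·x_k + Σ_{k<l} Q[k,l]·x_k·x_l`. -/
def energy {m : ℕ} (Q : Fin m → Fin m → ℝ) (x : Fin m → ℝ) : ℝ :=
  ∑ k, Q k k * x k + ∑ k, ∑ l, if k < l then Q k l * x k * x l else 0

/-- `x` is a binary (0/1-valued) vector. -/
def IsBinary {m : ℕ} (x : Fin m → ℝ) : Prop := ∀ k, x k = 0 ∨ x k = 1

/-- Entries of the new (n+1)-st row/column of the modified matrix. -/
def modCol {n : ℕ} (Q : Fin n → Fin n → ℝ) (i j : Fin n) (S : Finset (Fin n)) (z : ℝ)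
    (k : Fin n) : ℝ :=
  if k = i ∨ k = j then -2 * z else if k ∈ S then Q i k else 0

/-- Entries of the modified matrix among the original n indices. -/
def modCore {n : ℕ} (Q : Fin n → Fin n → ℝ) (i j : Fin n) (S : Finset (Fin n)) (z : ℝ)
    (k l : Fin n) : ℝ :=
  if k = i ∧ l = i then Q i i + z
  else if k = j ∧ l = j then Q j j + z
  else if (k = i ∧ l = j) ∨ (k = j ∧ l = i) then Q i j + 2 * z
  else if (k = i ∨ k = j) ∧ l ∈ S then 0
  else if (l = i ∨ l = j) ∧ k ∈ S then 0
  else Q k l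

/-- The modified (n+1)×(n+1) QUBO matrix `Q_mod` obtained from `Q` by factoring out the
semi-symmetry `S` of the conflicting pair `(i,j)` into the ancilla qubit (index `n+1`). -/
def modQ {n : ℕ} (Q : Fin n → Fin n → ℝ) (i j : Fin n) (S : Finset (Fin n)) (z : ℝ) :
    Fin (n + 1) → Fin (n + 1) → ℝ := fun a b =>
  if ha : a = Fin.last n then
    if hb : b = Fin.last n then z
    else modCol Q i j S z (b.castPred hb)
  else if hb : b = Fin.last n then modCol Q i j S z (a.castPred ha)
  else modCore Q i j S z (a.castPred ha) (b.castPred hb)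

/-!
Write `s = x i + x j` and `T = ∑ k ∈ S, Q i k * x k`. For binary `x` and ancilla value `a`,
`H_{Q_mod}(x, a) = H_Q(x) + z (s - a)² + (a - s) T`: the entries of `Q_mod` on `{i, j, n+1}`
realise the penalty `z (s - a)²`, and because `Q i k = Q j k` on `S` the deleted couplings of
`x i` and `x j` to `S` contribute exactly `s T`, which the ancilla column puts back as `a T`.
For valid `x` we have `s ∈ {0, 1}`; the ancilla value `a = s` gives `H_Q(x)`, the other one
costs `z ± T ≥ 0` since `|T| ≤ ∑ k ∈ S, |Q i k| ≤ z`.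
-/

theorem sum_sum_ite_lt_of_symm {ι M : Type*} [Fintype ι] [LinearOrder ι] [AddCommGroup M]
    (g : ι → ι → M) (hg : ∀ k l, g k l = g l k) :
    2 • ∑ k, ∑ l, (if k < l then g k l else 0) = ∑ k, ∑ l, g k l - ∑ k, g k k := by
  have hsplit : ∀ k l, g k l =
      (if k < l then g k l else 0) + (if l < k then g l k else 0) + (if k = l then g k l else 0) := by
    intro k l
    rcases lt_trichotomy k l with h | rfl | h
    · simp [h, h.ne, h.asymm]
    · simp
    · simp [h, h.ne', h.asymm, hg k l]
  have hlower : ∑ k, ∑ l, (if l < k then g l k else 0) = ∑ k, ∑ l, (if k < l then g k l else 0) :=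
    sum_comm
  conv_rhs => rw [sum_congr rfl fun k _ => sum_congr rfl fun l _ => hsplit k l]
  simp only [sum_add_distrib, hlower, sum_ite_eq, mem_univ, if_true]
  abel

section Energy

variable {m : ℕ}

theorem two_mul_energy_of_symm (P : Fin m → Fin m → ℝ) (hP : ∀ k l, P k l = P l k)
    (x : Fin m → ℝ) :
    2 * energy P x =
      2 * ∑ k, P k k * x k + ∑ k, ∑ l, P k l * x k * x l - ∑ k, P k k * x k ^ 2 := by
  have h := sum_sum_ite_lt_of_symm (fun k l => P k l * x k * x l)
    (fun k l => by rw [hP]; ring)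
  have hdiag : ∑ k, P k k * x k * x k = ∑ k, P k k * x k ^ 2 :=
    sum_congr rfl fun k _ => by ring
  rw [two_nsmul, hdiag] at h
  unfold energy
  linarith

theorem energy_snoc (P : Fin (m + 1) → Fin (m + 1) → ℝ) (x : Fin m → ℝ) (a : ℝ) :
    energy P (Fin.snoc x a) =
      energy (fun k l => P k.castSucc l.castSucc) x
        + a * ∑ k, P k.castSucc (Fin.last m) * x k + P (Fin.last m) (Fin.last m) * a := by
  have hlast : ∀ l : Fin m, ¬ Fin.last m < l.castSucc := fun l => (Fin.castSucc_lt_last l).not_gt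
  simp only [energy, Fin.sum_univ_castSucc, Fin.snoc_castSucc, Fin.snoc_last,
    Fin.castSucc_lt_castSucc_iff, Fin.castSucc_lt_last, hlast, lt_irrefl, if_true, if_false,
    sum_const_zero, add_zero, mul_sum, sum_add_distrib]
  ring_nf

theorem IsBinary.abs_le_one {x : Fin m → ℝ} (hx : IsBinary x) (k : Fin m) : |x k| ≤ 1 := by
  rcases hx k with h | h <;> simp [h]

end Energy

theorem abs_sum_mul_le {ι : Type*} (s : Finset ι) (f x : ι → ℝ) (hx : ∀ k, |x k| ≤ 1) :
    |∑ k ∈ s, f k * x k| ≤ ∑ k ∈ s, |f k| :=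
  calc |∑ k ∈ s, f k * x k| ≤ ∑ k ∈ s, |f k * x k| := abs_sum_le_sum_abs _ _
    _ ≤ ∑ k ∈ s, |f k| := sum_le_sum fun k _ => by
      rw [abs_mul]; exact mul_le_of_le_one_right (abs_nonneg _) (hx k)

section Modification

variable {n : ℕ} (Q : Fin n → Fin n → ℝ) (i j : Fin n) (S : Finset (Fin n)) (z : ℝ)

theorem modQ_castSucc_castSucc (k l : Fin n) :
    modQ Q i j S z k.castSucc l.castSucc = modCore Q i j S z k l := by
  simp [modQ, Fin.castSucc_ne_last]

theorem modQ_castSucc_last (k : Fin n) :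
    modQ Q i j S z k.castSucc (Fin.last n) = modCol Q i j S z k := by
  simp [modQ, Fin.castSucc_ne_last]

theorem modQ_last_last : modQ Q i j S z (Fin.last n) (Fin.last n) = z := by
  simp [modQ]

variable {Q i j S}

theorem modCore_symm (hQ : ∀ k l, Q k l = Q l k) (k l : Fin n) :
    modCore Q i j S z k l = modCore Q i j S z l k := by
  unfold modCore
  by_cases hki : k = i <;> by_cases hkj : k = j <;> by_cases hli : l = i <;>
    by_cases hlj : l = j <;> simp_all

theorem sum_modCore_diag_mul (hij : i ≠ j) (hiS : i ∉ S) (hjS : j ∉ S) (f : Fin n → ℝ) :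
    ∑ k, modCore Q i j S z k k * f k = ∑ k, Q k k * f k + z * (f i + f j) := by
  have h : ∀ k, modCore Q i j S z k k * f k =
      Q k k * f k + z * ((if k = i then f k else 0) + (if k = j then f k else 0)) := by
    intro k
    unfold modCore
    by_cases hki : k = i <;> by_cases hkj : k = j <;> by_cases hkS : k ∈ S <;> simp_all <;> ring
  simp only [h, sum_add_distrib, ← mul_sum, sum_ite_eq', mem_univ, if_true]

theorem sum_modCol_mul (hij : i ≠ j) (hiS : i ∉ S) (hjS : j ∉ S) (x : Fin n → ℝ) :
    ∑ k, modCol Q i j S z k * x k = ∑ k ∈ S, Q i k * x k - 2 * z * (x i + x j) := by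
  have h : ∀ k, modCol Q i j S z k * x k = (if k ∈ S then Q i k * x k else 0)
      - 2 * z * ((if k = i then x k else 0) + (if k = j then x k else 0)) := by
    intro k
    unfold modCol
    by_cases hki : k = i <;> by_cases hkj : k = j <;> by_cases hkS : k ∈ S <;> simp_all
  simp only [h, sum_sub_distrib, sum_add_distrib, ← mul_sum, sum_ite_eq', mem_univ, if_true,
    sum_ite_mem, univ_inter]

theorem sum_sum_modCore_mul (hij : i ≠ j) (hiS : i ∉ S) (hjS : j ∉ S)
    (hQ : ∀ k l, Q k l = Q l k) (hsemi : ∀ k ∈ S, Q i k = Q j k)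
    (x : Fin n → ℝ) :
    ∑ k, ∑ l, modCore Q i j S z k l * x k * x l =
      ∑ k, ∑ l, Q k l * x k * x l + z * ((x i + x j) ^ 2 + 2 * x i * x j)
        - 2 * (x i + x j) * ∑ k ∈ S, Q i k * x k := by
  set e : Fin n → Fin n → ℝ := fun p r => if r = p then x r else 0 with he
  set w : Fin n → ℝ := fun r => if r ∈ S then Q i r * x r else 0 with hw
  have hentry : ∀ k l, modCore Q i j S z k l * x k * x l =
      Q k l * x k * x l + z * (e i k + e j k) * (e i l + e j l)
        + z * e i k * e j l + z * e j k * e i l - (e i k + e j k) * w l - w k * (e i l + e j l) := by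
    intro k l
    simp only [he, hw, modCore]
    by_cases hki : k = i <;> by_cases hkj : k = j <;> by_cases hli : l = i <;>
      by_cases hlj : l = j <;> by_cases hkS : k ∈ S <;> by_cases hlS : l ∈ S <;>
        simp_all <;> ring
  have he_sum (p : Fin n) : ∑ r, e p r = x p := by simp [he]
  have hw_sum : ∑ r, w r = ∑ k ∈ S, Q i k * x k := by simp [hw, sum_ite_mem]
  simp only [hentry, sum_add_distrib, sum_sub_distrib, ← mul_sum, ← sum_mul, he_sum, hw_sum]
  ring

theorem energy_modCore (hij : i ≠ j) (hiS : i ∉ S) (hjS : j ∉ S)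
    (hQ : ∀ k l, Q k l = Q l k) (hsemi : ∀ k ∈ S, Q i k = Q j k)
    (x : Fin n → ℝ) :
    energy (modCore Q i j S z) x =
      energy Q x + z * (x i + x j + 2 * x i * x j) - (x i + x j) * ∑ k ∈ S, Q i k * x k := by
  have hmod := two_mul_energy_of_symm (modCore Q i j S z) (modCore_symm z hQ) x
  have hQx := two_mul_energy_of_symm Q hQ x
  have hsq := sum_modCore_diag_mul (Q := Q) z hij hiS hjS fun k => x k ^ 2
  rw [sum_sum_modCore_mul z hij hiS hjS hQ hsemi, sum_modCore_diag_mul z hij hiS hjS, hsq]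
    at hmod
  linear_combination (hmod - hQx) / 2

theorem energy_modQ_snoc (hij : i ≠ j) (hiS : i ∉ S) (hjS : j ∉ S)
    (hQ : ∀ k l, Q k l = Q l k) (hsemi : ∀ k ∈ S, Q i k = Q j k)
    (x : Fin n → ℝ) (a : ℝ) :
    energy (modQ Q i j S z) (Fin.snoc x a) =
      energy Q x + z * (x i + x j + 2 * x i * x j + a - 2 * a * (x i + x j))
        + (a - (x i + x j)) * ∑ k ∈ S, Q i k * x k := by
  simp only [energy_snoc, modQ_castSucc_castSucc, modQ_castSucc_last, modQ_last_last]
  rw [energy_modCore z hij hiS hjS hQ hsemi, sum_modCol_mul z hij hiS hjS]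
  ring

end Modification

/-- with `z ≥ Σ_{k∈S} |Q[i,k]|`, for every valid binary `x`
(`x i = 0` or `x j = 0`), the minimum over the ancilla value of the modified
energy equals the original energy. -/
theorem stmt8
    {n : ℕ} (Q : Fin n → Fin n → ℝ) (i j : Fin n) (S : Finset (Fin n)) (z : ℝ)
    (hQsymm : ∀ k l, Q k l = Q l k) (hij : i ≠ j)
    (hiS : i ∉ S) (hjS : j ∉ S) (hsemi : ∀ k ∈ S, Q i k = Q j k)
    (x : Fin n → ℝ) (hx : IsBinary x)
    (hz : (∑ k ∈ S, |Q i k|) ≤ z)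
    (hvalid : x i = 0 ∨ x j = 0) :
    min (energy (modQ Q i j S z) (Fin.snoc x 0))
        (energy (modQ Q i j S z) (Fin.snoc x 1)) = energy Q x := by
  have hT := abs_le.mp ((abs_sum_mul_le S (Q i) x hx.abs_le_one).trans hz)
  have hprod : 2 * x i * x j = 0 := by rcases hvalid with h | h <;> simp [h]
  have hs : x i + x j = 0 ∨ x i + x j = 1 := by
    rcases hx i with h | h <;> rcases hx j with h' | h' <;> simp_all
  rw [energy_modQ_snoc z hij hiS hjS hQsymm hsemi, energy_modQ_snoc z hij hiS hjS hQsymm hsemi,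
    hprod]
  rcases hs with hs | hs <;> rw [hs]
  · rw [min_eq_left] <;> linarith
  · rw [min_eq_right] <;> linarith
end

section
/- Let Q be a symmetric real n×n matrix, i ≠ j indices, S a semi-symmetry set for (i,j), and Q_mod the modified (n+1)×(n+1) matrix, where z satisfies z > 0 and z ≥ Σ_{k∈S} |Q[i,k]|. Then for every binary vector x ∈ {0,1}^n with x_i = 1 and x_j = 1 (an invalid solution), the extension with ancilla value 0 strictly increases the energy: H_{Q_mod}((x,0)) > H_Q(x). -/
open Finset

lemma two_mul_energy {m : ℕ} (M : Fin m → Fin m → ℝ) (hM : ∀ k l, M k l = M l k)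
    (x : Fin m → ℝ) (hx : IsBinary x) :
    2 * energy M x = (∑ k, ∑ l, M k l * x k * x l) + ∑ k, M k k * x k := by
  have hsq : ∀ k, x k * x k = x k := fun k => by rcases hx k with h|h <;> simp [h]
  have h1 : ∀ k : Fin m, ∑ l, M k l * x k * x l
      = (∑ l, if k < l then M k l * x k * x l else 0)
        + ((∑ l, if l < k then M k l * x k * x l else 0) + M k k * x k) := by
    intro k
    have hd : M k k * x k = ∑ l, if k = l then M k l * x k * x l else 0 := by
      rw [Finset.sum_ite_eq]
      simp only [Finset.mem_univ, if_true]
      rw [mul_assoc, hsq]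
    rw [hd, ← Finset.sum_add_distrib, ← Finset.sum_add_distrib]
    refine Finset.sum_congr rfl fun l _ => ?_
    rcases lt_trichotomy k l with h|h|h
    · simp [h, h.ne, not_lt_of_gt h]
    · simp [h]
    · simp [h, (h.ne).symm, not_lt_of_gt h, h.ne']
  have hfull : (∑ k, ∑ l, M k l * x k * x l)
      = (∑ k, ∑ l, if k < l then M k l * x k * x l else 0)
        + ((∑ k, ∑ l, if l < k then M k l * x k * x l else 0)
        + (∑ k, M k k * x k)) := by
    rw [Finset.sum_congr rfl fun k _ => h1 k, Finset.sum_add_distrib,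
      Finset.sum_add_distrib]
  have hswap : (∑ k, ∑ l, if l < k then M k l * x k * x l else 0)
      = (∑ k, ∑ l, if k < l then M k l * x k * x l else 0) := by
    rw [Finset.sum_comm]
    refine Finset.sum_congr rfl fun k _ => Finset.sum_congr rfl fun l _ => ?_
    rw [hM l k]; ring_nf
  rw [energy]
  rw [hswap] at hfull
  linarith [hfull]

lemma energy_snoc_zero {n : ℕ} (Q : Fin n → Fin n → ℝ) (i j : Fin n) (S : Finset (Fin n))
    (z : ℝ) (x : Fin n → ℝ) :
    energy (modQ Q i j S z) (Fin.snoc x 0) = energy (modCore Q i j S z) x := by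
  have hne : ∀ k : Fin n, k.castSucc ≠ Fin.last n := fun k => (Fin.castSucc_lt_last k).ne
  unfold energy
  rw [Fin.sum_univ_castSucc, Fin.sum_univ_castSucc]
  simp only [Fin.snoc_castSucc, Fin.snoc_last, mul_zero, add_zero]
  congr 1
  · refine Finset.sum_congr rfl fun k _ => ?_
    simp [modQ, hne k, Fin.castPred_castSucc]
  · rw [Fin.sum_univ_castSucc]
    simp only [Fin.snoc_last, mul_zero, zero_mul, ite_self, Finset.sum_const_zero, add_zero]
    refine Finset.sum_congr rfl fun k _ => ?_
    rw [Fin.sum_univ_castSucc]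
    simp only [Fin.snoc_castSucc, Fin.snoc_last, mul_zero, ite_self, add_zero]
    refine Finset.sum_congr rfl fun l _ => ?_
    have h2 : modQ Q i j S z k.castSucc l.castSucc = modCore Q i j S z k l := by
      simp [modQ, hne k, hne l, Fin.castPred_castSucc]
    simp only [Fin.castSucc_lt_castSucc_iff, h2]

def wfun {n : ℕ} (i j : Fin n) (k : Fin n) : ℝ :=
  (if k = i then 1 else 0) + (if k = j then 1 else 0)

def cfun {n : ℕ} (Q : Fin n → Fin n → ℝ) (i : Fin n) (S : Finset (Fin n)) (k : Fin n) : ℝ :=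
  if k ∈ S then Q i k else 0

lemma core_decomp {n : ℕ} (Q : Fin n → Fin n → ℝ) (i j : Fin n) (S : Finset (Fin n)) (z : ℝ)
    (hQsymm : ∀ k l, Q k l = Q l k) (hij : i ≠ j)
    (hiS : i ∉ S) (hjS : j ∉ S) (hsemi : ∀ k ∈ S, Q i k = Q j k) (k l : Fin n) :
    modCore Q i j S z k l = Q k l + z * wfun i j k * wfun i j l
      + (z * (if k = i ∧ l = j then 1 else 0) + z * (if k = j ∧ l = i then 1 else 0))
      - (wfun i j k * cfun Q i S l + wfun i j l * cfun Q i S k) := by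
  unfold modCore wfun cfun
  by_cases hki : k = i <;> by_cases hkj : k = j <;> by_cases hli : l = i <;>
    by_cases hlj : l = j <;> by_cases hkS : k ∈ S <;> by_cases hlS : l ∈ S <;>
    simp_all [hij, Ne.symm hij] <;> ring

lemma core_diag {n : ℕ} (Q : Fin n → Fin n → ℝ) (i j : Fin n) (S : Finset (Fin n)) (z : ℝ)
    (hij : i ≠ j) (hiS : i ∉ S) (hjS : j ∉ S) (k : Fin n) :
    modCore Q i j S z k k = Q k k + ((if k = i then z else 0) + (if k = j then z else 0)) := by
  unfold modCore
  by_cases hki : k = i <;> by_cases hkj : k = j <;>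
    simp_all [hij, Ne.symm hij] <;> ring

/-- with `z > 0` and `z ≥ Σ_{k∈S} |Q[i,k]|`, for every binary `x` with
`x i = 1` and `x j = 1` (an invalid solution), extending with ancilla value `0`
strictly increases the energy. -/
theorem stmt10
    {n : ℕ} (Q : Fin n → Fin n → ℝ) (i j : Fin n) (S : Finset (Fin n)) (z : ℝ)
    (hQsymm : ∀ k l, Q k l = Q l k) (hij : i ≠ j)
    (hiS : i ∉ S) (hjS : j ∉ S) (hsemi : ∀ k ∈ S, Q i k = Q j k)
    (x : Fin n → ℝ) (hx : IsBinary x)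
    (hzpos : 0 < z) (hz : (∑ k ∈ S, |Q i k|) ≤ z)
    (hxi : x i = 1) (hxj : x j = 1) :
    energy (modQ Q i j S z) (Fin.snoc x 0) > energy Q x := by
  rw [gt_iff_lt, energy_snoc_zero]
  set σ : ℝ := ∑ k ∈ S, Q i k * x k with hσ
  have hcd := core_decomp Q i j S z hQsymm hij hiS hjS hsemi
  -- symmetry of the core
  have hsymmCore : ∀ k l, modCore Q i j S z k l = modCore Q i j S z l k := by
    intro k l
    rw [hcd k l, hcd l k, hQsymm k l]
    by_cases h1 : k = i <;> by_cases h2 : k = j <;> by_cases h3 : l = i <;>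
      by_cases h4 : l = j <;> simp [h1, h2, h3, h4, hij, Ne.symm hij] <;> ring
  -- basic sums
  have hw : (∑ k, wfun i j k * x k) = 2 := by
    simp [wfun, add_mul, Finset.sum_add_distrib, ite_mul, zero_mul, one_mul,
      Finset.sum_ite_eq', hxi, hxj]
    norm_num
  have hdi : (∑ k, (if k = i then (1:ℝ) else 0) * x k) = 1 := by
    simp [ite_mul, zero_mul, one_mul, Finset.sum_ite_eq', hxi]
  have hdj : (∑ k, (if k = j then (1:ℝ) else 0) * x k) = 1 := by
    simp [ite_mul, zero_mul, one_mul, Finset.sum_ite_eq', hxj]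
  have hc : (∑ k, cfun Q i S k * x k) = σ := by
    simp [cfun, ite_mul, zero_mul, Finset.sum_ite_mem, Finset.univ_inter, hσ]
  have hcb : σ ≤ z := by
    refine le_trans (Finset.sum_le_sum fun k _ => ?_) hz
    rcases hx k with h|h <;> simp [h, abs_nonneg, le_abs_self]
  -- double sum decomposition
  have hdouble : (∑ k, ∑ l, modCore Q i j S z k l * x k * x l)
      = (∑ k, ∑ l, Q k l * x k * x l)
        + (∑ k, z * wfun i j k * x k) * (∑ k, wfun i j k * x k)
        + (∑ k, z * (if k = i then (1:ℝ) else 0) * x k) * (∑ k, (if k = j then (1:ℝ) else 0) * x k)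
        + (∑ k, z * (if k = j then (1:ℝ) else 0) * x k) * (∑ k, (if k = i then (1:ℝ) else 0) * x k)
        - (∑ k, wfun i j k * x k) * (∑ k, cfun Q i S k * x k)
        - (∑ k, cfun Q i S k * x k) * (∑ k, wfun i j k * x k) := by
    have hpt : ∀ k l : Fin n, modCore Q i j S z k l * x k * x l
        = Q k l * x k * x l + (z * wfun i j k * x k) * (wfun i j l * x l)
          + (z * (if k = i then (1:ℝ) else 0) * x k) * ((if l = j then (1:ℝ) else 0) * x l)
          + (z * (if k = j then (1:ℝ) else 0) * x k) * ((if l = i then (1:ℝ) else 0) * x l)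
          - (wfun i j k * x k) * (cfun Q i S l * x l)
          - (cfun Q i S k * x k) * (wfun i j l * x l) := by
      intro k l
      rw [hcd k l]
      have e1 : (if k = i ∧ l = j then (1:ℝ) else 0)
          = (if k = i then (1:ℝ) else 0) * (if l = j then (1:ℝ) else 0) := by
        by_cases h1 : k = i <;> by_cases h2 : l = j <;> simp [h1, h2]
      have e2 : (if k = j ∧ l = i then (1:ℝ) else 0)
          = (if k = j then (1:ℝ) else 0) * (if l = i then (1:ℝ) else 0) := by
        by_cases h1 : k = j <;> by_cases h2 : l = i <;> simp [h1, h2]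
      rw [e1, e2]; ring
    rw [Finset.sum_congr rfl fun k _ => Finset.sum_congr rfl fun l _ => hpt k l]
    simp [Finset.sum_add_distrib, Finset.sum_sub_distrib, ← Finset.sum_mul, ← Finset.mul_sum]
  have hzw : (∑ k, z * wfun i j k * x k) = 2 * z := by
    have : (∑ k, z * wfun i j k * x k) = z * ∑ k, wfun i j k * x k := by
      rw [Finset.mul_sum]; exact Finset.sum_congr rfl fun k _ => by ring
    rw [this, hw]; ring
  have hzdi : (∑ k, z * (if k = i then (1:ℝ) else 0) * x k) = z := by
    have : (∑ k, z * (if k = i then (1:ℝ) else 0) * x k)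
        = z * ∑ k, (if k = i then (1:ℝ) else 0) * x k := by
      rw [Finset.mul_sum]; exact Finset.sum_congr rfl fun k _ => by ring
    rw [this, hdi]; ring
  have hzdj : (∑ k, z * (if k = j then (1:ℝ) else 0) * x k) = z := by
    have : (∑ k, z * (if k = j then (1:ℝ) else 0) * x k)
        = z * ∑ k, (if k = j then (1:ℝ) else 0) * x k := by
      rw [Finset.mul_sum]; exact Finset.sum_congr rfl fun k _ => by ring
    rw [this, hdj]; ring
  rw [hw, hdi, hdj, hc, hzw, hzdi, hzdj] at hdouble
  -- diagonal decomposition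
  have hdiag : (∑ k, modCore Q i j S z k k * x k) = (∑ k, Q k k * x k) + 2 * z := by
    have hpt : ∀ k, modCore Q i j S z k k * x k
        = Q k k * x k + ((if k = i then z else 0) * x k + (if k = j then z else 0) * x k) := by
      intro k
      rw [core_diag Q i j S z hij hiS hjS k]; ring
    rw [Finset.sum_congr rfl fun k _ => hpt k, Finset.sum_add_distrib,
      Finset.sum_add_distrib]
    simp [ite_mul, zero_mul, Finset.sum_ite_eq', hxi, hxj]
    ring
  have h2m := two_mul_energy (modCore Q i j S z) hsymmCore x hx
  have h2q := two_mul_energy Q hQsymm x hx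
  rw [hdouble, hdiag] at h2m
  nlinarith [hzpos, hcb]
end
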